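/- arXiv:2006.15676 — 2 statements merged into one kernel-verified Lean document; each statement's English description precedes it below -/
import Mathlib

section
/- Let E be a real inner product space and let D, Dstar, G : E → E be linear maps such that ⟪D f, g⟫ = ⟪f, Dstar g⟫ for all f, g ∈ E, Dstar ∘ D = D ∘ Dstar, and D ∘ G = G ∘ D = id. Then the generalized Π-operator Π := Dstar ∘ G preserves the inner product: for all f, g ∈ E one has ⟪Π f, Π g⟫ = ⟪f, g⟫. -/
open scoped InnerProductSpace ComplexConjugate

theorem inner_formalAdjoint_apply_eq_inner_apply_of_commute {𝕜 E : Type*} [RCLike 𝕜]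
    [NormedAddCommGroup E] [InnerProductSpace 𝕜 E] {D Dstar : E →ₗ[𝕜] E}
    (hadj : ∀ x y : E, ⟪D x, y⟫_𝕜 = ⟪x, Dstar y⟫_𝕜) (hcomm : Dstar ∘ₗ D = D ∘ₗ Dstar)
    (x y : E) : ⟪Dstar x, Dstar y⟫_𝕜 = ⟪D x, D y⟫_𝕜 :=
  calc ⟪Dstar x, Dstar y⟫_𝕜 = ⟪D (Dstar x), y⟫_𝕜 := (hadj _ _).symm
    _ = ⟪Dstar (D x), y⟫_𝕜 := congrArg (⟪·, y⟫_𝕜) (LinearMap.congr_fun hcomm x).symm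
    _ = conj ⟪y, Dstar (D x)⟫_𝕜 := (inner_conj_symm _ _).symm
    _ = conj ⟪D y, D x⟫_𝕜 := by rw [hadj]
    _ = ⟪D x, D y⟫_𝕜 := inner_conj_symm _ _

theorem pi_operator_inner_preserving_general {E : Type*} [NormedAddCommGroup E]
    [InnerProductSpace ℝ E] (D Dstar G : E →ₗ[ℝ] E)
    (hadj : ∀ f g : E, (inner ℝ (D f) g : ℝ) = inner ℝ f (Dstar g))
    (hcomm : Dstar ∘ₗ D = D ∘ₗ Dstar)
    (hDG : D ∘ₗ G = LinearMap.id) :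
    ∀ f g : E, (inner ℝ ((Dstar ∘ₗ G) f) ((Dstar ∘ₗ G) g) : ℝ) = inner ℝ f g := by
  intro f g
  have hG : ∀ x, D (G x) = x := LinearMap.congr_fun hDG
  calc ⟪Dstar (G f), Dstar (G g)⟫_ℝ = ⟪D (G f), D (G g)⟫_ℝ :=
        inner_formalAdjoint_apply_eq_inner_apply_of_commute hadj hcomm _ _
    _ = ⟪f, g⟫_ℝ := by rw [hG, hG]

/-- The generalized Π-operator `Π := Dstar ∘ G` preserves the inner product. -/
theorem pi_operator_inner_preserving {E : Type*} [NormedAddCommGroup E]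
    [InnerProductSpace ℝ E] (D Dstar G : E →ₗ[ℝ] E)
    (hadj : ∀ f g : E, (inner ℝ (D f) g : ℝ) = inner ℝ f (Dstar g))
    (hcomm : Dstar ∘ₗ D = D ∘ₗ Dstar)
    (hDG : D ∘ₗ G = LinearMap.id) (hGD : G ∘ₗ D = LinearMap.id) :
    ∀ f g : E, (inner ℝ ((Dstar ∘ₗ G) f) ((Dstar ∘ₗ G) g) : ℝ) = inner ℝ f g :=
  pi_operator_inner_preserving_general D Dstar G hadj hcomm hDG
end

section
/- Let E be a real inner product space and let M, N, T : E → E be linear maps satisfying ⟪M f, g⟫ = −⟪f, N g⟫ for all f, g ∈ E, M ∘ N = N ∘ M, and M ∘ T = id. Then the operator Π := N ∘ T preserves the inner product: for all f, g ∈ E one has ⟪Π f, Π g⟫ = ⟪f, g⟫; in particular Π∗Π = id. -/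
/-!
With `N = -M*`, the commuting relation gives `N*N = -MN = -NM = M*M`, so `N` and `M` induce the
same form `⟪N x, N y⟫ = ⟪M x, M y⟫`. Applied to `x = T f`, `y = T g`, where `M T = id`, this is
`⟪Π f, Π g⟫ = ⟪f, g⟫`.
-/

section

variable {𝕜 E : Type*} [RCLike 𝕜] [SeminormedAddCommGroup E] [InnerProductSpace 𝕜 E]
  {M N : E →ₗ[𝕜] E}

lemma inner_map_left_eq_neg_inner_right_of_adjoint_eq_neg
    (hadj : ∀ x y : E, inner 𝕜 (M x) y = -inner 𝕜 x (N y)) (x y : E) :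
    inner 𝕜 (N x) y = -inner 𝕜 x (M y) := by
  rw [← inner_conj_symm x, hadj, map_neg, neg_neg, inner_conj_symm]

lemma inner_map_map_eq_of_adjoint_eq_neg_of_commute
    (hadj : ∀ x y : E, inner 𝕜 (M x) y = -inner 𝕜 x (N y)) (hMN : M ∘ₗ N = N ∘ₗ M) (x y : E) :
    inner 𝕜 (N x) (N y) = inner 𝕜 (M x) (M y) := by
  have hMNx : M (N x) = N (M x) := LinearMap.congr_fun hMN x
  calc inner 𝕜 (N x) (N y) = -inner 𝕜 (M (N x)) y := by rw [hadj, neg_neg]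
    _ = -inner 𝕜 (N (M x)) y := by rw [hMNx]
    _ = inner 𝕜 (M x) (M y) := by
      rw [inner_map_left_eq_neg_inner_right_of_adjoint_eq_neg hadj, neg_neg]

end

/-- The hyperbolic Π-operator `Π := N ∘ T` preserves the inner product
(so that `Π∗Π = id`), when `⟪M f, g⟫ = −⟪f, N g⟫`, `M ∘ N = N ∘ M` and
`M ∘ T = id`. -/
theorem hyperbolic_pi_inner_preserving {E : Type*} [NormedAddCommGroup E]
    [InnerProductSpace ℝ E] (M N T : E →ₗ[ℝ] E)
    (hadj : ∀ f g : E, (inner ℝ (M f) g : ℝ) = -inner ℝ f (N g))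
    (hMN : M ∘ₗ N = N ∘ₗ M) (hMT : M ∘ₗ T = LinearMap.id) :
    ∀ f g : E, (inner ℝ ((N ∘ₗ T) f) ((N ∘ₗ T) g) : ℝ) = inner ℝ f g := by
  intro f g
  have hMTf : M (T f) = f := LinearMap.congr_fun hMT f
  have hMTg : M (T g) = g := LinearMap.congr_fun hMT g
  rw [LinearMap.comp_apply, LinearMap.comp_apply,
    inner_map_map_eq_of_adjoint_eq_neg_of_commute hadj hMN, hMTf, hMTg]
end
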